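/- arXiv:2310.11445 — 2 statements merged into one kernel-verified Lean document; each statement's English description precedes it below -/
import Mathlib

section
/- If f : ℝ^d → ℝ is differentiable and satisfies the dissipativity condition ⟨∇f(x), x⟩ ≥ m‖x‖² − b for all x (with constants m > 0, b ≥ 0), then for all x, f(x) ≥ (m/4)‖x‖² + f(x*) − b/2, where x* is a global minimizer of f. -/
/-!
Along the ray `t ↦ t • x`, dissipativity says `t φ'(t) ≥ m t² ‖x‖² − b` for `φ t = f (t • x)`.
This alone does not integrate (the `−b/t` term blows up at `0`), but the weighted function
`t² (φ t − f x⋆ + b/2) − m ‖x‖² t⁴ / 4` has nonnegative derivative on `[0, 1]`: the `−b t` coming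
from dissipativity is compensated by `2 t (φ t − f x⋆ + b/2) ≥ b t`. Comparing its values at `0`
and `1` gives the bound.
-/

open RealInnerProductSpace Set

theorem HasGradientAt.hasDerivAt_comp_smul_const {E : Type*} [NormedAddCommGroup E]
    [InnerProductSpace ℝ E] [CompleteSpace E] {f : E → ℝ} {g x : E} {t : ℝ}
    (h : HasGradientAt f g (t • x)) : HasDerivAt (fun s : ℝ => f (s • x)) ⟪g, x⟫ t := by
  have hline : HasDerivAt (fun s : ℝ => s • x) x t := by
    simpa using (hasDerivAt_id t).smul_const x
  have hcomp : HasDerivAt (fun s : ℝ => f (s • x)) (InnerProductSpace.toDual ℝ E g x) t :=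
    h.hasFDerivAt.comp_hasDerivAt t hline
  simpa using hcomp

theorem add_sub_le_apply_one_of_mul_deriv_ge {φ φ' : ℝ → ℝ} {a b c : ℝ}
    (hφ : ∀ t, HasDerivAt φ (φ' t) t) (hc : ∀ t, c ≤ φ t)
    (hgrowth : ∀ t ∈ Ioo 0 1, a * t ^ 2 - b ≤ t * φ' t) :
    a / 4 + c - b / 2 ≤ φ 1 := by
  set G : ℝ → ℝ := fun t => t ^ 2 * (φ t - (c - b / 2)) - a * t ^ 4 / 4
  have hG : ∀ t, HasDerivAt G (2 * t * (φ t - (c - b / 2)) + t ^ 2 * φ' t - a * t ^ 3) t :=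
    fun t => (((hasDerivAt_pow 2 t).fun_mul ((hφ t).sub_const (c - b / 2))).fun_sub
      (((hasDerivAt_pow 4 t).const_mul a).div_const 4)).congr_deriv (by push_cast; ring)
  have hmono : MonotoneOn G (Icc 0 1) := by
    refine monotoneOn_of_hasDerivWithinAt_nonneg (convex_Icc 0 1)
      (fun t _ => (hG t).continuousAt.continuousWithinAt)
      (fun t _ => (hG t).hasDerivWithinAt) ?_
    rintro t ht
    rw [interior_Icc] at ht
    have hpos : 0 ≤ t * (φ t - c) := mul_nonneg ht.1.le (sub_nonneg.2 (hc t))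
    have hdiss : t * (a * t ^ 2 - b) ≤ t * (t * φ' t) :=
      mul_le_mul_of_nonneg_left (hgrowth t ht) ht.1.le
    nlinarith
  have hG01 := hmono (left_mem_Icc.2 zero_le_one) (right_mem_Icc.2 zero_le_one) zero_le_one
  simp only [G] at hG01
  linarith

theorem dissipative_quadratic_lower_bound_general {d : ℕ}
    (f : EuclideanSpace ℝ (Fin d) → ℝ) (m b : ℝ)
    (hf : Differentiable ℝ f)
    (hdiss : ∀ x, m * ‖x‖ ^ 2 - b ≤ ⟪gradient f x, x⟫)
    (xstar : EuclideanSpace ℝ (Fin d)) (hmin : ∀ y, f xstar ≤ f y) :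
    ∀ x, m / 4 * ‖x‖ ^ 2 + f xstar - b / 2 ≤ f x := by
  intro x
  have hray : ∀ t : ℝ, HasDerivAt (fun s : ℝ => f (s • x)) ⟪gradient f (t • x), x⟫ t :=
    fun t => (hf _).hasGradientAt.hasDerivAt_comp_smul_const
  have hgrowth : ∀ t ∈ Ioo (0 : ℝ) 1,
      m * ‖x‖ ^ 2 * t ^ 2 - b ≤ t * ⟪gradient f (t • x), x⟫ := by
    intro t _
    have := hdiss (t • x)
    rw [real_inner_smul_right, norm_smul, Real.norm_eq_abs, mul_pow, sq_abs] at this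
    linarith
  have hbound := add_sub_le_apply_one_of_mul_deriv_ge hray (fun t => hmin (t • x)) hgrowth
  simp only [one_smul] at hbound
  linarith

/-- Under dissipativity `⟪∇f(x), x⟫ ≥ m‖x‖² − b`, the function is lower bounded by a
quadratic: `f(x) ≥ (m/4)‖x‖² + f(x⋆) − b/2` where `x⋆` is a global minimizer. -/
theorem dissipative_quadratic_lower_bound {d : ℕ}
    (f : EuclideanSpace ℝ (Fin d) → ℝ) (m b : ℝ) (hm : 0 < m) (hb : 0 ≤ b)
    (hf : Differentiable ℝ f)
    (hdiss : ∀ x, m * ‖x‖ ^ 2 - b ≤ ⟪gradient f x, x⟫)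
    (xstar : EuclideanSpace ℝ (Fin d)) (hmin : ∀ y, f xstar ≤ f y) :
    ∀ x, m / 4 * ‖x‖ ^ 2 + f xstar - b / 2 ≤ f x :=
  dissipative_quadratic_lower_bound_general f m b hf hdiss xstar hmin
end

section
/- Let Q be a reversible ergodic Markov chain with eigenvalues 1 = λ₀ > |λ₁| ≥ ⋯, spectral gap γ = 1 − λ₁, and conductance φ. Let W be the Szegedy quantum walk operator built from Q and define the phase gap Δ(W) = 2 arccos|λ₁|. Then Δ(W) ≥ 2√γ ≥ √2 · φ. -/
/-- Phase gap of the Szegedy quantum walk. For a reversible ergodic chain with second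
eigenvalue `λ₁ ∈ [0,1]`, spectral gap `γ = 1 − λ₁` and conductance `φ` satisfying
Cheeger's inequality `γ ≥ φ²/2`, the phase gap `Δ(W) = 2 arccos λ₁` of the quantum walk
satisfies `Δ(W) ≥ 2√γ ≥ √2 · φ`. -/
theorem quantum_walk_phase_gap (lam1 gamma phi : ℝ)
    (h0 : 0 ≤ lam1) (h1 : lam1 ≤ 1)
    (hgamma : gamma = 1 - lam1) (hphi : 0 ≤ phi)
    (cheeger : phi ^ 2 ≤ 2 * gamma) :
    2 * Real.sqrt gamma ≤ 2 * Real.arccos lam1 ∧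
      Real.sqrt 2 * phi ≤ 2 * Real.sqrt gamma := by
  have hg0 : 0 ≤ gamma := by rw [hgamma]; linarith
  constructor
  · have ht0 : 0 ≤ Real.arccos lam1 := Real.arccos_nonneg lam1
    have hcos : Real.cos (Real.arccos lam1) = lam1 := Real.cos_arccos (by linarith) h1
    have hb := Real.one_sub_sq_div_two_le_cos (x := Real.arccos lam1)
    rw [hcos] at hb
    have hsq : gamma ≤ (Real.arccos lam1) ^ 2 := by rw [hgamma]; nlinarith
    have := Real.sqrt_le_sqrt hsq
    rw [Real.sqrt_sq ht0] at this
    linarith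
  · have h2 : Real.sqrt 2 * phi = Real.sqrt (2 * phi ^ 2) := by
      rw [Real.sqrt_mul (by norm_num), Real.sqrt_sq hphi]
    have h4 : 2 * Real.sqrt gamma = Real.sqrt (4 * gamma) := by
      rw [show (4:ℝ) * gamma = 2^2 * gamma by ring, Real.sqrt_mul (by positivity),
        Real.sqrt_sq (by norm_num)]
    rw [h2, h4]
    exact Real.sqrt_le_sqrt (by nlinarith)
end
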